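/- For every R ∈ (0,∞) there exists a closed ball B ⊂ ℝ₊^I centered at the origin of finite radius such that every fluid model solution n(·) with ‖n(0)‖ ≤ R satisfies F(n(t)) ≤ F(n(0)) for all t ≥ 0 and n(t) ∈ B for all t ≥ 0. -/

import Mathlib

/-!
Along a fluid model solution `n`, the function `t ↦ F(n(t))` is absolutely continuous, and at a
regular point its derivative is `K(n) = Σᵢ κᵢ nᵢ^α ρᵢ^(-α) (ρᵢ - Λᵢ(n))`, the directional derivative
of the concave objective `G_n` at `ρ` in the direction of `Λ(n)`. Concavity bounds it by
`G_n(ρ) - G_n(Λ(n))`, which is `≤ 0` because `ρ` (restricted to `I₊(n)`) is feasible by the load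
condition and `Λ(n)` is optimal. The fundamental theorem of calculus for absolutely continuous
functions then makes `F(n(·))` nonincreasing. Finally `F` is monotone and coercive, so
`F(n(t)) ≤ F(n(0)) ≤ F(R, …, R)` bounds every coordinate of `n(t)`.
-/

open Real Set

noncomputable section

/-- Feasible set for the bandwidth allocation problem at state `n`: the vector
`Λ⁺ = (Λ_i : i ∈ I₊(n))` is embedded in `ℝ^I` by requiring `L i = 0` whenever `n i = 0`. -/
def Feasible {I J : ℕ} (A : Fin J → Fin I → ℝ) (C : Fin J → ℝ)
    (n : Fin I → ℝ) : Set (Fin I → ℝ) :=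
  {L | (∀ i, 0 ≤ L i) ∧ (∀ i, n i = 0 → L i = 0) ∧ ∀ j, ∑ i, A j i * L i ≤ C j}

/-- The objective `G_n(Λ⁺)`, taking the value `⊥ = -∞` when `α ≥ 1` and some
coordinate of `Λ⁺` in `I₊(n)` vanishes. -/
def Gfun {I : ℕ} (α : ℝ) (κ : Fin I → ℝ) (n L : Fin I → ℝ) : EReal :=
  if 1 ≤ α ∧ ∃ i, 0 < n i ∧ L i = 0 then ⊥
  else if α = 1 then
    ((∑ i, if 0 < n i then κ i * n i * Real.log (L i) else 0 : ℝ) : EReal)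
  else
    ((∑ i, if 0 < n i then κ i * n i ^ α * L i ^ (1 - α) / (1 - α) else 0 : ℝ) : EReal)

/-- `L` is an optimal weighted α-fair bandwidth allocation for the state `n`,
i.e. a maximizer of `G_n` over the feasible set for `n` (with `L i = 0` for `i ∈ I₀(n)`). -/
def IsAlloc {I J : ℕ} (A : Fin J → Fin I → ℝ) (C : Fin J → ℝ) (α : ℝ)
    (κ : Fin I → ℝ) (n L : Fin I → ℝ) : Prop :=
  L ∈ Feasible A C n ∧ ∀ L' ∈ Feasible A C n, Gfun α κ n L' ≤ Gfun α κ n L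

/-- `f` is absolutely continuous on `[0, T]` for every `T > 0` (ε-δ definition with
finitely many pairwise disjoint subintervals). -/
def AbsContNonneg (f : ℝ → ℝ) : Prop :=
  ∀ T > (0:ℝ), ∀ ε > (0:ℝ), ∃ δ > (0:ℝ), ∀ (m : ℕ) (a b : Fin m → ℝ),
    (∀ k, 0 ≤ a k ∧ a k ≤ b k ∧ b k ≤ T) →
    (∀ k l, k < l → b k ≤ a l ∨ b l ≤ a k) →
    (∑ k, (b k - a k)) < δ → (∑ k, |f (b k) - f (a k)|) < ε

/-- Fluid model solution: `n : [0,∞) → ℝ₊^I` absolutely continuous, and at every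
regular point `t` the derivative conditions (13) and capacity condition (14) hold. -/
def IsFluidSol {I J : ℕ} (A : Fin J → Fin I → ℝ) (C : Fin J → ℝ)
    (ν μ : Fin I → ℝ) (Λ : (Fin I → ℝ) → Fin I → ℝ)
    (n : ℝ → Fin I → ℝ) : Prop :=
  (∀ i, AbsContNonneg fun t => n t i) ∧
  (∀ t ∈ Ici (0:ℝ), ∀ i, 0 ≤ n t i) ∧
  ∀ t ∈ Ici (0:ℝ),
    (∀ i, DifferentiableWithinAt ℝ (fun s => n s i) (Ici 0) t) →
    (∀ i, (0 < n t i →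
        HasDerivWithinAt (fun s => n s i) (ν i - μ i * Λ (n t) i) (Ici 0) t) ∧
      (n t i = 0 → HasDerivWithinAt (fun s => n s i) 0 (Ici 0) t)) ∧
    ∀ j, (∑ i, A j i * (if 0 < n t i then Λ (n t) i else ν i / μ i)) ≤ C j

/-- The set `J*` of critically loaded resources. -/
def Jstar {I J : ℕ} (A : Fin J → Fin I → ℝ) (C : Fin J → ℝ)
    (ν μ : Fin I → ℝ) : Set (Fin J) :=
  {j | ∑ i, A j i * (ν i / μ i) = C j}

/-- The workload map `w(n)`. -/
def wl {I J : ℕ} (A : Fin J → Fin I → ℝ) (μ : Fin I → ℝ)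
    (n : Fin I → ℝ) : Fin J → ℝ :=
  fun j => ∑ i, A j i * n i / μ i

/-- Feasible set of the workload optimization problem (22) for workload `w`. -/
def WFeasible {I J : ℕ} (A : Fin J → Fin I → ℝ) (C : Fin J → ℝ)
    (ν μ : Fin I → ℝ) (w : Fin J → ℝ) : Set (Fin I → ℝ) :=
  {m | (∀ i, 0 ≤ m i) ∧ ∀ j ∈ Jstar A C ν μ, w j ≤ ∑ i, A j i * m i / μ i}

/-- The Lyapunov function `F`. -/
def Ffun {I : ℕ} (α : ℝ) (κ ν μ : Fin I → ℝ) (n : Fin I → ℝ) : ℝ :=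
  (1 / (α + 1)) * ∑ i, ν i * κ i * μ i ^ (α - 1) * (n i / ν i) ^ (α + 1)

/-- The function `K` (the derivative of `F` along fluid model solutions). -/
def Kfun {I : ℕ} (α : ℝ) (κ ν μ : Fin I → ℝ)
    (Λ : (Fin I → ℝ) → Fin I → ℝ) (n : Fin I → ℝ) : ℝ :=
  ∑ i, if 0 < n i then κ i * (μ i * n i / ν i) ^ α * (ν i / μ i - Λ n i) else 0

/-- Degenerate intervals are moved to `(0, 0]`, so that the disjoint intervals of Mathlib's
definition become the separated intervals of `AbsContNonneg`. -/
lemma AbsContNonneg.absolutelyContinuousOnInterval {f : ℝ → ℝ} (hf : AbsContNonneg f) {T : ℝ}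
    (hT : 0 < T) : AbsolutelyContinuousOnInterval f 0 T := by
  rw [absolutelyContinuousOnInterval_iff]
  intro ε hε
  obtain ⟨δ, hδ, H⟩ := hf T hT ε hε
  refine ⟨δ, hδ, fun ⟨m, E⟩ ⟨hmem, hdisj⟩ hlen => ?_⟩
  simp only [uIcc_of_le hT.le] at hmem
  let a : Fin m → ℝ := fun k => if (E k).1 = (E k).2 then 0 else min (E k).1 (E k).2
  let b : Fin m → ℝ := fun k => if (E k).1 = (E k).2 then 0 else max (E k).1 (E k).2
  have hmem' : ∀ k : Fin m, (E k).1 ∈ Icc 0 T ∧ (E k).2 ∈ Icc 0 T :=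
    fun k => hmem k (Finset.mem_range.2 k.2)
  have hab : ∀ k, 0 ≤ a k ∧ a k ≤ b k ∧ b k ≤ T := by
    intro k
    obtain ⟨⟨h1, h2⟩, h3, h4⟩ := hmem' k
    by_cases hk : (E k).1 = (E k).2 <;> simp only [a, b, hk, if_true, if_false] <;>
      refine ⟨?_, ?_, ?_⟩ <;> simp [*, hT.le]
  have hsep : ∀ k l : Fin m, k < l → b k ≤ a l ∨ b l ≤ a k := by
    intro k l hkl
    by_cases hk : (E k).1 = (E k).2
    · exact Or.inl (by simpa [b, hk] using (hab l).1)
    by_cases hl : (E l).1 = (E l).2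
    · exact Or.inr (by simpa [b, hl] using (hab k).1)
    have hd := hdisj (Finset.mem_coe.2 (Finset.mem_range.2 k.2))
      (Finset.mem_coe.2 (Finset.mem_range.2 l.2)) (Fin.val_injective.ne hkl.ne)
    simp only [uIoc, Ioc_disjoint_Ioc] at hd
    have hk' : min (E k).1 (E k).2 < max (E k).1 (E k).2 := min_lt_max.2 hk
    have hl' : min (E l).1 (E l).2 < max (E l).1 (E l).2 := min_lt_max.2 hl
    simp only [a, b, hk, hl, if_false]
    rcases min_choice (max (E k).1 (E k).2) (max (E l).1 (E l).2) with h | h <;>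
    rcases max_choice (min (E k).1 (E k).2) (min (E l).1 (E l).2) with h' | h' <;>
    rw [h, h'] at hd
    all_goals first | (left; linarith) | (right; linarith)
  have hdist : ∀ k, b k - a k = dist (E k).1 (E k).2 ∧
      |f (b k) - f (a k)| = dist (f (E k).1) (f (E k).2) := by
    intro k
    by_cases hk : (E k).1 = (E k).2
    · simp [a, b, hk]
    refine ⟨by simp [a, b, hk, max_sub_min_eq_abs, Real.dist_eq, abs_sub_comm], ?_⟩
    rcases le_total (E k).1 (E k).2 with h | h <;>
      simp [a, b, hk, h, Real.dist_eq, abs_sub_comm]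
  have := H m a b hab hsep (by
    simpa [hdist, Fin.sum_univ_eq_sum_range (fun k => dist (E k).1 (E k).2)] using hlen)
  simpa [hdist, Fin.sum_univ_eq_sum_range (fun k => dist (f (E k).1) (f (E k).2))] using this

lemma LipschitzOnWith.comp_absolutelyContinuousOnInterval {X Y : Type*} [PseudoMetricSpace X]
    [PseudoMetricSpace Y] {φ : X → Y} {K : NNReal} {s : Set X} {f : ℝ → X} {a b : ℝ}
    (hφ : LipschitzOnWith K φ s) (hf : AbsolutelyContinuousOnInterval f a b)
    (hfs : MapsTo f (uIcc a b) s) : AbsolutelyContinuousOnInterval (φ ∘ f) a b := by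
  rw [absolutelyContinuousOnInterval_iff] at hf ⊢
  intro ε hε
  obtain ⟨δ, hδ, H⟩ := hf (ε / (K + 1)) (by positivity)
  refine ⟨δ, hδ, fun E hE hlen => ?_⟩
  calc ∑ i ∈ Finset.range E.1, dist ((φ ∘ f) (E.2 i).1) ((φ ∘ f) (E.2 i).2)
      ≤ ∑ i ∈ Finset.range E.1, K * dist (f (E.2 i).1) (f (E.2 i).2) :=
        Finset.sum_le_sum fun i hi =>
          hφ.dist_le_mul _ (hfs (hE.1 i hi).1) _ (hfs (hE.1 i hi).2)
    _ = K * ∑ i ∈ Finset.range E.1, dist (f (E.2 i).1) (f (E.2 i).2) := by rw [Finset.mul_sum]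
    _ ≤ K * (ε / (K + 1)) := by gcongr; exact (H E hE hlen).le
    _ < (K + 1) * (ε / (K + 1)) := by gcongr; linarith
    _ = ε := by field_simp

lemma ContDiff.comp_absolutelyContinuousOnInterval {φ f : ℝ → ℝ} {a b : ℝ}
    (hφ : ContDiff ℝ 1 φ) (hf : AbsolutelyContinuousOnInterval f a b) :
    AbsolutelyContinuousOnInterval (φ ∘ f) a b := by
  obtain ⟨M, hM⟩ := hf.exists_bound
  obtain ⟨K, hK⟩ := hφ.contDiffOn.exists_lipschitzOnWith one_ne_zero (convex_Icc (-M) M)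
    isCompact_Icc
  exact hK.comp_absolutelyContinuousOnInterval hf fun x hx => abs_le.1 (hM x hx)

lemma AbsolutelyContinuousOnInterval.finset_sum {ι : Type*} {s : Finset ι} {f : ι → ℝ → ℝ}
    {a b : ℝ} (hf : ∀ i ∈ s, AbsolutelyContinuousOnInterval (f i) a b) :
    AbsolutelyContinuousOnInterval (fun x => ∑ i ∈ s, f i x) a b := by
  classical
  induction s using Finset.induction_on with
  | empty =>
    simpa using (LipschitzWith.const (α := ℝ) (0 : ℝ)).lipschitzOnWith
      |>.absolutelyContinuousOnInterval (a := a) (b := b)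
  | insert i s hi ih =>
    simp only [Finset.sum_insert hi]
    exact (hf i (Finset.mem_insert_self i s)).fun_add
      (ih fun j hj => hf j (Finset.mem_insert_of_mem hj))

def utility (α x : ℝ) : ℝ := if α = 1 then Real.log x else x ^ (1 - α) / (1 - α)

lemma one_sub_le_utility_one_sub_utility {α s : ℝ} (hα : 0 < α) (hs : 0 ≤ s)
    (hs' : 1 ≤ α → 0 < s) : 1 - s ≤ utility α 1 - utility α s := by
  unfold utility
  split_ifs with h1
  · linarith [Real.log_le_sub_one_of_pos (hs' h1.ge), Real.log_one]
  rcases lt_or_gt_of_ne h1 with hlt | hgt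
  · have hp : 0 < 1 - α := by linarith
    have := rpow_one_add_le_one_add_mul_self (s := s - 1) (by linarith) hp.le (by linarith)
    rw [add_sub_cancel] at this
    rw [Real.one_rpow, ← sub_div, le_div_iff₀ hp]
    nlinarith
  · -- `s ^ (1 - α) = exp ((1 - α) log s) ≥ 1 + (1 - α) log s`, and `log s ≤ s - 1`
    have hs0 := hs' hgt.le
    have hp : 1 - α < 0 := by linarith
    have hexp : (1 - α) * Real.log s + 1 ≤ s ^ (1 - α) := by
      rw [Real.rpow_def_of_pos hs0, mul_comm]
      exact Real.add_one_le_exp _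
    have hlog := Real.log_le_sub_one_of_pos hs0
    rw [Real.one_rpow, ← sub_div, le_div_iff_of_neg hp]
    nlinarith

lemma utility_sub_utility_mul {α ρ s : ℝ} (hρ : 0 < ρ) (hs : 0 ≤ s) (hs' : α = 1 → 0 < s) :
    utility α ρ - utility α (ρ * s) = ρ ^ (1 - α) * (utility α 1 - utility α s) := by
  unfold utility
  split_ifs with h1
  · rw [Real.log_mul hρ.ne' (hs' h1).ne', h1, sub_self, Real.rpow_zero, Real.log_one]
    ring
  · rw [Real.mul_rpow hρ.le hs, Real.one_rpow]
    ring

lemma rpow_neg_mul_sub_le_utility_sub {α ρ L : ℝ} (hα : 0 < α) (hρ : 0 < ρ) (hL : 0 ≤ L)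
    (hL' : 1 ≤ α → 0 < L) : ρ ^ (-α) * (ρ - L) ≤ utility α ρ - utility α L := by
  obtain ⟨s, hs, rfl⟩ : ∃ s, 0 ≤ s ∧ L = ρ * s := ⟨L / ρ, by positivity, by field_simp⟩
  have hs' : 1 ≤ α → 0 < s := fun h => pos_of_mul_pos_right (hL' h) hρ.le
  calc ρ ^ (-α) * (ρ - ρ * s) = ρ ^ (1 - α) * (1 - s) := by
        rw [sub_eq_add_neg 1 α, Real.rpow_add hρ, Real.rpow_one]; ring
    _ ≤ ρ ^ (1 - α) * (utility α 1 - utility α s) := by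
        have := one_sub_le_utility_one_sub_utility hα hs hs'
        gcongr
    _ = utility α ρ - utility α (ρ * s) :=
        (utility_sub_utility_mul hρ hs fun h => hs' h.ge).symm

section Allocation

variable {I J : ℕ} {A : Fin J → Fin I → ℝ} {C : Fin J → ℝ} {α : ℝ} {κ ν μ : Fin I → ℝ}

lemma Gfun_eq_sum_utility {n L : Fin I → ℝ} (h : ¬(1 ≤ α ∧ ∃ i, 0 < n i ∧ L i = 0)) :
    Gfun α κ n L = ((∑ i, if 0 < n i then κ i * n i ^ α * utility α (L i) else 0 : ℝ) : EReal) := by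
  rw [Gfun, if_neg h]
  split_ifs with h1
  · simp only [utility, h1, if_true, Real.rpow_one]
  · simp only [utility, h1, if_false, mul_div_assoc]

lemma Kfun_nonpos {Λ : (Fin I → ℝ) → Fin I → ℝ} {n : Fin I → ℝ}
    (hA : ∀ j i, 0 ≤ A j i) (hα : 0 < α) (hκ : ∀ i, 0 < κ i) (hν : ∀ i, 0 < ν i)
    (hμ : ∀ i, 0 < μ i) (hload : ∀ j, (∑ i, A j i * (ν i / μ i)) ≤ C j)
    (hΛ : IsAlloc A C α κ n (Λ n)) (hn : ∀ i, 0 ≤ n i) :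
    Kfun α κ ν μ Λ n ≤ 0 := by
  obtain ⟨⟨hL0, -, -⟩, hopt⟩ := hΛ
  have hρ : ∀ i, 0 < ν i / μ i := fun i => div_pos (hν i) (hμ i)
  set ρ' : Fin I → ℝ := fun i => if 0 < n i then ν i / μ i else 0
  have hρ'feas : ρ' ∈ Feasible A C n := by
    refine ⟨fun i => ?_, fun i hi => by simp [ρ', hi],
      fun j => (Finset.sum_le_sum fun i _ => ?_).trans (hload j)⟩
    · by_cases hi : 0 < n i <;> simp [ρ', hi, (hρ i).le]
    · by_cases hi : 0 < n i <;> simp [ρ', hi, mul_nonneg (hA j i) (hρ i).le]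
  have hρ'pos : ¬(1 ≤ α ∧ ∃ i, 0 < n i ∧ ρ' i = 0) := by
    rintro ⟨-, i, hi, h0⟩
    simp [ρ', hi, (hρ i).ne'] at h0
  have hG := hopt ρ' hρ'feas
  have hLpos : ¬(1 ≤ α ∧ ∃ i, 0 < n i ∧ Λ n i = 0) := by
    intro h
    rw [Gfun_eq_sum_utility hρ'pos, Gfun, if_pos h] at hG
    exact (EReal.bot_lt_coe _).not_ge hG
  rw [Gfun_eq_sum_utility hρ'pos, Gfun_eq_sum_utility hLpos, EReal.coe_le_coe_iff] at hG
  calc Kfun α κ ν μ Λ n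
      ≤ ∑ i, ((if 0 < n i then κ i * n i ^ α * utility α (ρ' i) else 0)
          - (if 0 < n i then κ i * n i ^ α * utility α (Λ n i) else 0)) := by
        refine Finset.sum_le_sum fun i _ => ?_
        by_cases hi : 0 < n i
        · have hLi : 1 ≤ α → 0 < Λ n i := fun h1 =>
            (hL0 i).lt_of_ne' fun h0 => hLpos ⟨h1, i, hi, h0⟩
          have hrate : (μ i * n i / ν i) ^ α = n i ^ α * (ν i / μ i) ^ (-α) := by
            rw [show μ i * n i / ν i = n i / (ν i / μ i) by field_simp [(hμ i).ne', (hν i).ne'],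
              Real.div_rpow (hn i) (hρ i).le, Real.rpow_neg (hρ i).le, div_eq_mul_inv]
          simp only [ρ', hi, if_true, hrate, ← mul_sub]
          rw [← mul_assoc (κ i), mul_assoc (κ i * n i ^ α)]
          exact mul_le_mul_of_nonneg_left (rpow_neg_mul_sub_le_utility_sub hα (hρ i) (hL0 i) hLi)
            (by have := hκ i; positivity)
        · simp [hi]
    _ ≤ 0 := by rw [Finset.sum_sub_distrib, sub_nonpos]; exact hG

end Allocation

section Lyapunov

variable {I : ℕ} {α : ℝ} {κ ν μ : Fin I → ℝ}

lemma Ffun_comp_absolutelyContinuousOnInterval (hα : 0 ≤ α) {n : ℝ → Fin I → ℝ} {a b : ℝ}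
    (hn : ∀ i, AbsolutelyContinuousOnInterval (fun s => n s i) a b) :
    AbsolutelyContinuousOnInterval (fun s => Ffun α κ ν μ (n s)) a b := by
  let φ : Fin I → ℝ → ℝ := fun i y => ν i * κ i * μ i ^ (α - 1) * (y / ν i) ^ (α + 1)
  have hφ : ∀ i, ContDiff ℝ 1 (φ i) := fun i =>
    contDiff_const.mul ((Real.contDiff_rpow_const_of_le (n := 1) (by norm_num; linarith)).comp
      (contDiff_id.div_const _))
  have hF : (fun s => Ffun α κ ν μ (n s)) = fun s => 1 / (α + 1) * ∑ i, φ i (n s i) := rfl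
  rw [hF]
  exact (AbsolutelyContinuousOnInterval.finset_sum fun i _ =>
    (hφ i).comp_absolutelyContinuousOnInterval (hn i)).const_mul _

lemma hasDerivAt_Ffun_comp (hα : 0 ≤ α) (hν : ∀ i, 0 < ν i) {n : ℝ → Fin I → ℝ}
    {v : Fin I → ℝ} {x : ℝ} (hn : ∀ i, HasDerivAt (fun s => n s i) (v i) x) :
    HasDerivAt (fun s => Ffun α κ ν μ (n s))
      (∑ i, κ i * μ i ^ (α - 1) * (n x i / ν i) ^ α * v i) x := by
  have hp : (1 : ℝ) ≤ α + 1 := by linarith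
  have := (HasDerivAt.fun_sum (u := Finset.univ) fun i _ => (((hn i).div_const (ν i)).rpow_const
    (Or.inr hp)).const_mul (ν i * κ i * μ i ^ (α - 1))).const_mul (1 / (α + 1))
  refine this.congr_deriv ?_
  rw [Finset.mul_sum]
  refine Finset.sum_congr rfl fun i _ => ?_
  rw [add_sub_cancel_right]
  field_simp [(hν i).ne']

lemma Kfun_eq_sum (hν : ∀ i, 0 < ν i) (hμ : ∀ i, 0 < μ i)
    {Λ : (Fin I → ℝ) → Fin I → ℝ} {n : Fin I → ℝ} (hn : ∀ i, 0 ≤ n i) :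
    Kfun α κ ν μ Λ n = ∑ i, κ i * μ i ^ (α - 1) * (n i / ν i) ^ α *
      (if 0 < n i then ν i - μ i * Λ n i else 0) := by
  refine Finset.sum_congr rfl fun i _ => ?_
  split_ifs with hi
  · rw [mul_div_assoc, Real.mul_rpow (hμ i).le (div_nonneg (hn i) (hν i).le),
      Real.rpow_sub_one (hμ i).ne']
    field_simp [(hν i).ne', (hμ i).ne']
  · simp


lemma Ffun_mono (hα : 0 < α) (hκ : ∀ i, 0 < κ i) (hν : ∀ i, 0 < ν i) (hμ : ∀ i, 0 < μ i)
    {m m' : Fin I → ℝ} (hm : ∀ i, 0 ≤ m i) (hmm' : ∀ i, m i ≤ m' i) :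
    Ffun α κ ν μ m ≤ Ffun α κ ν μ m' := by
  unfold Ffun
  gcongr with i
  · have := hν i; have := hκ i; have := Real.rpow_pos_of_pos (hμ i) (α - 1)
    positivity
  · exact div_nonneg (hm i) (hν i).le
  · exact (hν i).le
  · exact hmm' i

lemma coord_le_of_Ffun_le (hα : 0 < α) (hκ : ∀ i, 0 < κ i) (hν : ∀ i, 0 < ν i) (hμ : ∀ i, 0 < μ i)
    {m : Fin I → ℝ} (hm : ∀ i, 0 ≤ m i) {c : ℝ} (hc : Ffun α κ ν μ m ≤ c) (i : Fin I) :
    m i ≤ ν i * ((α + 1) * c / (ν i * κ i * μ i ^ (α - 1))) ^ (α + 1)⁻¹ := by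
  have hd : ∀ j, 0 < ν j * κ j * μ j ^ (α - 1) := fun j => by
    have := hν j; have := hκ j; have := Real.rpow_pos_of_pos (hμ j) (α - 1)
    positivity
  have hterm_nonneg : ∀ j, 0 ≤ ν j * κ j * μ j ^ (α - 1) * (m j / ν j) ^ (α + 1) := fun j =>
    mul_nonneg (hd j).le (Real.rpow_nonneg (div_nonneg (hm j) (hν j).le) _)
  have hterm : ν i * κ i * μ i ^ (α - 1) * (m i / ν i) ^ (α + 1) ≤ (α + 1) * c := by
    rw [Ffun, one_div, inv_mul_le_iff₀ (by linarith)] at hc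
    exact (Finset.single_le_sum (fun j _ => hterm_nonneg j) (Finset.mem_univ i)).trans hc
  rw [← div_le_iff₀' (hν i), Real.le_rpow_inv_iff_of_pos (div_nonneg (hm i) (hν i).le)
    (div_nonneg ((hterm_nonneg i).trans hterm) (hd i).le) (by linarith), le_div_iff₀' (hd i)]
  exact hterm

end Lyapunov

open MeasureTheory Filter Topology in
theorem IsFluidSol.Ffun_le_Ffun_zero {I J : ℕ} {A : Fin J → Fin I → ℝ} {C : Fin J → ℝ}
    {α : ℝ} {κ ν μ : Fin I → ℝ} {Λ : (Fin I → ℝ) → Fin I → ℝ} {n : ℝ → Fin I → ℝ}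
    (hA : ∀ j i, 0 ≤ A j i) (hα : 0 < α) (hκ : ∀ i, 0 < κ i) (hν : ∀ i, 0 < ν i)
    (hμ : ∀ i, 0 < μ i) (hload : ∀ j, (∑ i, A j i * (ν i / μ i)) ≤ C j)
    (hΛ : ∀ m : Fin I → ℝ, (∀ i, 0 ≤ m i) → IsAlloc A C α κ m (Λ m))
    (hn : IsFluidSol A C ν μ Λ n) {t : ℝ} (ht : 0 ≤ t) :
    Ffun α κ ν μ (n t) ≤ Ffun α κ ν μ (n 0) := by
  obtain ⟨hac, hnonneg, hfluid⟩ := hn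
  rcases ht.eq_or_lt with rfl | ht
  · rfl
  have hacn : ∀ i, AbsolutelyContinuousOnInterval (fun s => n s i) 0 t := fun i =>
    (hac i).absolutelyContinuousOnInterval ht
  have hderiv : ∀ᵐ x, x ∈ Ioc 0 t → deriv (fun s => Ffun α κ ν μ (n s)) x ≤ 0 := by
    filter_upwards [ae_all_iff.2 fun i => (hacn i).ae_differentiableAt] with x hdiff hx
    have hx0 : x ∈ Ici (0 : ℝ) := hx.1.le
    have hnhds : Ici (0 : ℝ) ∈ 𝓝 x := Ici_mem_nhds hx.1
    obtain ⟨hvel, -⟩ := hfluid x hx0 fun i =>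
      (hdiff i (uIcc_of_le ht.le ▸ Ioc_subset_Icc_self hx)).differentiableWithinAt
    have hv : ∀ i, HasDerivAt (fun s => n s i)
        (if 0 < n x i then ν i - μ i * Λ (n x) i else 0) x := by
      intro i
      split_ifs with hi
      · exact ((hvel i).1 hi).hasDerivAt hnhds
      · exact ((hvel i).2 (le_antisymm (not_lt.1 hi) (hnonneg x hx0 i))).hasDerivAt hnhds
    rw [(hasDerivAt_Ffun_comp hα.le hν hv).deriv, ← Kfun_eq_sum hν hμ (hnonneg x hx0)]
    exact Kfun_nonpos hA hα hκ hν hμ hload (hΛ _ (hnonneg x hx0)) (hnonneg x hx0)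
  have hFTC := (Ffun_comp_absolutelyContinuousOnInterval (κ := κ) (ν := ν) (μ := μ) hα.le
    hacn).integral_deriv_eq_sub
  rw [intervalIntegral.integral_of_le ht.le] at hFTC
  linarith [setIntegral_nonpos_ae measurableSet_Ioc hderiv]

theorem stmt19_general {I J : ℕ}
    (A : Fin J → Fin I → ℝ) (hA01 : ∀ j i, A j i = 0 ∨ A j i = 1)
    (C : Fin J → ℝ)
    (α : ℝ) (hα : 0 < α) (κ : Fin I → ℝ) (hκ : ∀ i, 0 < κ i)
    (ν μ : Fin I → ℝ) (hν : ∀ i, 0 < ν i) (hμ : ∀ i, 0 < μ i)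
    (hload : ∀ j, (∑ i, A j i * (ν i / μ i)) ≤ C j)
    (Λ : (Fin I → ℝ) → Fin I → ℝ)
    (hΛ : ∀ n : Fin I → ℝ, (∀ i, 0 ≤ n i) → IsAlloc A C α κ n (Λ n)) :
    ∀ R > (0:ℝ), ∃ r : ℝ, ∀ n : ℝ → Fin I → ℝ,
      IsFluidSol A C ν μ Λ n → Real.sqrt (∑ i, (n 0 i) ^ 2) ≤ R →
      ∀ t ∈ Ici (0:ℝ), Ffun α κ ν μ (n t) ≤ Ffun α κ ν μ (n 0) ∧
        Real.sqrt (∑ i, (n t i) ^ 2) ≤ r := by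
  intro R _
  have hA : ∀ j i, 0 ≤ A j i := fun j i => by rcases hA01 j i with h | h <;> simp [h]
  set c := Ffun α κ ν μ fun _ => R
  refine ⟨Real.sqrt (∑ i, (ν i * ((α + 1) * c / (ν i * κ i * μ i ^ (α - 1))) ^ (α + 1)⁻¹) ^ 2),
    fun n hn hR t ht => ?_⟩
  have hnonneg := hn.2.1
  have hdecr := hn.Ffun_le_Ffun_zero hA hα hκ hν hμ hload hΛ ht
  have hinit : Ffun α κ ν μ (n 0) ≤ c := Ffun_mono hα hκ hν hμ (hnonneg 0 self_mem_Ici) fun i =>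
    (le_abs_self _).trans ((Real.abs_le_sqrt
      (Finset.single_le_sum (fun j _ => sq_nonneg (n 0 j)) (Finset.mem_univ i))).trans hR)
  refine ⟨hdecr, Real.sqrt_le_sqrt (Finset.sum_le_sum fun i _ => ?_)⟩
  exact pow_le_pow_left₀ (hnonneg t ht i)
    (coord_le_of_Ffun_le hα hκ hν hμ (hnonneg t ht) (hdecr.trans hinit) i) 2

theorem stmt19 {I J : ℕ} (hI : 0 < I) (hJ : 0 < J)
    (A : Fin J → Fin I → ℝ) (hA01 : ∀ j i, A j i = 0 ∨ A j i = 1)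
    (hAcol : ∀ i, ∃ j, A j i = 1) (hArank : LinearIndependent ℝ A)
    (C : Fin J → ℝ) (hC : ∀ j, 0 < C j)
    (α : ℝ) (hα : 0 < α) (κ : Fin I → ℝ) (hκ : ∀ i, 0 < κ i)
    (ν μ : Fin I → ℝ) (hν : ∀ i, 0 < ν i) (hμ : ∀ i, 0 < μ i)
    (hload : ∀ j, (∑ i, A j i * (ν i / μ i)) ≤ C j)
    (hJs : (Jstar A C ν μ).Nonempty)
    (Λ : (Fin I → ℝ) → Fin I → ℝ)
    (hΛ : ∀ n : Fin I → ℝ, (∀ i, 0 ≤ n i) → IsAlloc A C α κ n (Λ n)) :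
    ∀ R > (0:ℝ), ∃ r : ℝ, ∀ n : ℝ → Fin I → ℝ,
      IsFluidSol A C ν μ Λ n → Real.sqrt (∑ i, (n 0 i) ^ 2) ≤ R →
      ∀ t ∈ Ici (0:ℝ), Ffun α κ ν μ (n t) ≤ Ffun α κ ν μ (n 0) ∧
        Real.sqrt (∑ i, (n t i) ^ 2) ≤ r :=
  stmt19_general A hA01 C α hα κ hκ ν μ hν hμ hload Λ hΛ
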